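/- Let P_0, …, P_9 be a symmetric Clifford system on ℝ^{32} and let x ∈ ℝ^{32} be a unit vector which is a common eigenvector of all the operators P_{2i}P_{2i+1}P_{2j}P_{2j+1}, 0 ≤ i < j ≤ 4 (each with eigenvalue ±1). Then the dimension of the linear span of the 45 vectors {P_i P_j x : 0 ≤ i < j ≤ 9} is at most 21. -/

import Mathlib

/-! For `a < b` put `Q_ab = P_{2a} P_{2a+1} P_{2b} P_{2b+1}`, so that `Q_ab x = ±x`. Since the
`P_i` are anticommuting involutions, multiplying `Q_ab` on the left by `P_{2a} P_{2a+1}`,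
`P_{2a} P_{2b}` and `P_{2a} P_{2b+1}` gives `-P_{2b} P_{2b+1}`, `P_{2a+1} P_{2b+1}` and
`-P_{2a+1} P_{2b}`. Applied to `x`, this puts every `P_i P_j x` into the span of the
`2 * choose 5 2 + 1 = 21` vectors `P_0 P_1 x`, `P_{2a} P_{2b} x` and `P_{2a} P_{2b+1} x` (`a < b`). -/

open Matrix Module Submodule

section CliffordRelations

variable {ι R : Type*} [DecidableEq ι] [Ring R] {P : ι → R}

theorem mul_self_eq_one_of_clifford (K : Type*) [DivisionRing K] [NeZero (2 : K)] [Module K R]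
    (hP : ∀ i j, P i * P j + P j * P i = if i = j then 2 else 0) (i : ι) : P i * P i = 1 := by
  have h : (2 : K) • (P i * P i) = (2 : K) • 1 := by
    rw [two_smul, two_smul, one_add_one_eq_two, hP i i, if_pos rfl]
  exact smul_right_injective R two_ne_zero h

theorem mul_eq_neg_mul_of_clifford (hP : ∀ i j, P i * P j + P j * P i = if i = j then 2 else 0)
    {i j : ι} (hij : i ≠ j) : P i * P j = -(P j * P i) :=
  eq_neg_of_add_eq_zero_left <| by rw [hP, if_neg hij]

end CliffordRelations

section AnticommutingInvolutions

variable {ι R : Type*} [Ring R] {P : ι → R}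

theorem pair_ij_mul_quad (hsq : ∀ i, P i * P i = 1)
    (hanti : ∀ i j, i ≠ j → P i * P j = -(P j * P i)) {i j : ι} (k l : ι) (hij : i ≠ j) :
    P i * P j * (P i * P j * P k * P l) = -(P k * P l) := by
  have hsq' : P i * P j * (P i * P j) = -1 := by
    calc P i * P j * (P i * P j) = P i * (P j * P i) * P j := by simp only [mul_assoc]
      _ = -1 := by rw [hanti j i hij.symm, mul_neg, ← mul_assoc, hsq, one_mul, neg_mul, hsq]
  rw [mul_assoc _ (P k), ← mul_assoc, hsq', neg_one_mul]

theorem pair_ik_mul_quad (hsq : ∀ i, P i * P i = 1)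
    (hanti : ∀ i j, i ≠ j → P i * P j = -(P j * P i)) {i j k : ι} (l : ι)
    (hik : i ≠ k) (hjk : j ≠ k) :
    P i * P k * (P i * P j * P k * P l) = P j * P l := by
  have hswap : P i * P j * P k * P l = -(P i * P k * P j * P l) := by
    rw [mul_assoc (P i), hanti j k hjk, mul_neg, neg_mul, ← mul_assoc]
  rw [hswap, mul_neg, pair_ij_mul_quad hsq hanti _ _ hik, neg_neg]

theorem pair_il_mul_quad (hsq : ∀ i, P i * P i = 1)
    (hanti : ∀ i j, i ≠ j → P i * P j = -(P j * P i)) {i j k l : ι}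
    (hil : i ≠ l) (hjl : j ≠ l) (hkl : k ≠ l) :
    P i * P l * (P i * P j * P k * P l) = -(P j * P k) := by
  have hmove : P i * P j * P k * P l = P i * P l * P j * P k := by
    rw [mul_assoc, mul_assoc, hanti k l hkl, mul_neg, ← mul_assoc (P j), hanti j l hjl]
    simp only [neg_mul, neg_neg, mul_assoc]
  rw [hmove, pair_ij_mul_quad hsq hanti _ _ hil]

end AnticommutingInvolutions

section EigenvectorSpan

variable {K n : Type*} [CommRing K] [Fintype n] {x : n → K} {ε : K} {Q : Matrix n n K}

theorem mul_mulVec_mem_span_singleton (hQ : Q *ᵥ x = ε • x) (C : Matrix n n K) :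
    (C * Q) *ᵥ x ∈ K ∙ (C *ᵥ x) := by
  rw [← mulVec_mulVec, hQ, mulVec_smul]
  exact smul_mem _ _ (mem_span_singleton_self _)

end EigenvectorSpan

def pairIdx {m : ℕ} (a : Fin m) (k : Fin 2) : Fin (2 * m) := ⟨2 * a + k, by omega⟩

theorem pairIdx_cases {m : ℕ} {i j : Fin (2 * m)} (hij : i < j) :
    (∃ a, i = pairIdx a 0 ∧ j = pairIdx a 1) ∨
      ∃ a b k l, a < b ∧ i = pairIdx a k ∧ j = pairIdx b l := by
  have hi := i.isLt
  have hj := j.isLt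
  have hij' : i.val < j.val := hij
  by_cases h : i.val / 2 = j.val / 2
  · left
    refine ⟨⟨i / 2, by omega⟩, Fin.ext ?_, Fin.ext ?_⟩ <;>
      simp only [pairIdx, Fin.coe_ofNat_eq_mod] <;> omega
  · right
    refine ⟨⟨i / 2, by omega⟩, ⟨j / 2, by omega⟩, ⟨i % 2, by omega⟩, ⟨j % 2, by omega⟩,
      Fin.mk_lt_mk.2 (by omega), Fin.ext ?_, Fin.ext ?_⟩ <;> simp only [pairIdx] <;> omega

theorem pairIdx_ne {m : ℕ} {a b : Fin m} {k l : Fin 2} (h : a ≠ b ∨ k ≠ l) :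
    pairIdx a k ≠ pairIdx b l := by
  intro hab
  have := congrArg Fin.val hab
  simp only [pairIdx] at this
  rcases h with h | h
  · exact h (Fin.ext (by omega))
  · exact h (Fin.ext (by omega))

section PairedCliffordSystem

variable {K n : Type*} [Field K] [Fintype n] [DecidableEq n] {m : ℕ} [NeZero m]

def pairSpanningFamily (P : Fin (2 * m) → Matrix n n K) (x : n → K) :
    Option ({p : Fin m × Fin m // p.1 < p.2} × Fin 2) → n → K
  | none => (P (pairIdx 0 0) * P (pairIdx 0 1)) *ᵥ x
  | some (p, l) => (P (pairIdx p.1.1 0) * P (pairIdx p.1.2 l)) *ᵥ x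

theorem mul_mulVec_mem_span_pairSpanningFamily (P : Fin (2 * m) → Matrix n n K)
    (hsq : ∀ i, P i * P i = 1) (hanti : ∀ i j, i ≠ j → P i * P j = -(P j * P i)) (x : n → K)
    (heig : ∀ a b : Fin m, a < b → ∃ ε : K,
      (P (pairIdx a 0) * P (pairIdx a 1) * P (pairIdx b 0) * P (pairIdx b 1)) *ᵥ x = ε • x)
    {i j : Fin (2 * m)} (hij : i < j) :
    (P i * P j) *ᵥ x ∈ span K (Set.range (pairSpanningFamily P x)) := by
  set W := span K (Set.range (pairSpanningFamily P x))
  have hgen : ∀ o, pairSpanningFamily P x o ∈ W := fun o => subset_span (Set.mem_range_self o)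
  have hquad : ∀ {a b : Fin m} {C N : Matrix n n K}, a < b → C *ᵥ x ∈ W →
      (C * (P (pairIdx a 0) * P (pairIdx a 1) * P (pairIdx b 0) * P (pairIdx b 1)) = N ∨
        C * (P (pairIdx a 0) * P (pairIdx a 1) * P (pairIdx b 0) * P (pairIdx b 1)) = -N) →
      N *ᵥ x ∈ W := by
    intro a b C N hab hC hN
    obtain ⟨ε, hε⟩ := heig a b hab
    have hCQ := span_singleton_le_iff_mem _ _ |>.2 hC (mul_mulVec_mem_span_singleton hε C)
    rcases hN with hN | hN
    · rwa [hN] at hCQ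
    · rw [hN, neg_mulVec] at hCQ
      simpa using neg_mem hCQ
  rcases pairIdx_cases hij with ⟨a, rfl, rfl⟩ | ⟨a, b, k, l, hab, rfl, rfl⟩
  · rcases eq_or_ne a 0 with rfl | ha
    · exact hgen none
    · exact hquad ((Fin.pos_iff_ne_zero' a).2 ha) (hgen none) <| Or.inr <|
        pair_ij_mul_quad (P := P) hsq hanti _ _ (pairIdx_ne (.inr zero_ne_one))
  obtain rfl | rfl : k = 0 ∨ k = 1 := by fin_cases k <;> simp
  · exact hgen (some (⟨(a, b), hab⟩, l))
  obtain rfl | rfl : l = 0 ∨ l = 1 := by fin_cases l <;> simp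
  · exact hquad hab (hgen (some (⟨(a, b), hab⟩, 1))) <| Or.inr <|
      pair_il_mul_quad (P := P) hsq hanti (pairIdx_ne (.inl hab.ne)) (pairIdx_ne (.inl hab.ne))
        (pairIdx_ne (.inr zero_ne_one))
  · exact hquad hab (hgen (some (⟨(a, b), hab⟩, 0))) <| Or.inl <|
      pair_ik_mul_quad (P := P) hsq hanti _ (pairIdx_ne (.inl hab.ne)) (pairIdx_ne (.inl hab.ne))

theorem finrank_span_mul_mulVec_le (P : Fin (2 * m) → Matrix n n K)
    (hsq : ∀ i, P i * P i = 1) (hanti : ∀ i j, i ≠ j → P i * P j = -(P j * P i)) (x : n → K)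
    (heig : ∀ a b : Fin m, a < b → ∃ ε : K,
      (P (pairIdx a 0) * P (pairIdx a 1) * P (pairIdx b 0) * P (pairIdx b 1)) *ᵥ x = ε • x) :
    finrank K (span K {v | ∃ i j : Fin (2 * m), i < j ∧ v = (P i * P j) *ᵥ x}) ≤
      2 * m.choose 2 + 1 := by
  have hcard : Fintype.card (Option ({p : Fin m × Fin m // p.1 < p.2} × Fin 2)) =
      2 * m.choose 2 + 1 := by
    simp [Fintype.card_subtype, Fintype.card_product_filter_lt, mul_comm]
  calc _ ≤ finrank K (span K (Set.range (pairSpanningFamily P x))) := by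
        refine finrank_mono (span_le.2 ?_)
        rintro _ ⟨i, j, hij, rfl⟩
        exact mul_mulVec_mem_span_pairSpanningFamily P hsq hanti x heig hij
    _ ≤ 2 * m.choose 2 + 1 := hcard ▸ finrank_range_le_card _

end PairedCliffordSystem

/-- For a symmetric Clifford system `P_0, …, P_9` on `ℝ^{32}` and
a unit vector `x` which is a common eigenvector (with eigenvalues `±1`) of all
the operators `P_{2i} P_{2i+1} P_{2j} P_{2j+1}` (`0 ≤ i < j ≤ 4`), the span of
the 45 vectors `P_i P_j x` (`0 ≤ i < j ≤ 9`) has dimension at most 21. -/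
theorem fkm_96_span_dim_le_21
    (P : Fin 10 → Matrix (Fin 32) (Fin 32) ℝ)
    (hcliff : ∀ i j, P i * P j + P j * P i =
      if i = j then (2 : Matrix (Fin 32) (Fin 32) ℝ) else 0)
    (x : Fin 32 → ℝ)
    (heig : ∀ i j : Fin 5, i < j → ∃ ε : ℝ, (ε = 1 ∨ ε = -1) ∧
      (P ⟨2 * i.val, by have := i.isLt; omega⟩ *
       P ⟨2 * i.val + 1, by have := i.isLt; omega⟩ *
       P ⟨2 * j.val, by have := j.isLt; omega⟩ *
       P ⟨2 * j.val + 1, by have := j.isLt; omega⟩).mulVec x = ε • x) :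
    Module.finrank ℝ ↥(Submodule.span ℝ
      {v : Fin 32 → ℝ | ∃ i j : Fin 10, i < j ∧ v = (P i * P j).mulVec x}) ≤ 21 :=
  finrank_span_mul_mulVec_le (m := 5) P (mul_self_eq_one_of_clifford ℝ hcliff)
    (fun _ _ => mul_eq_neg_mul_of_clifford hcliff) x
    (fun a b hab => (heig a b hab).imp fun _ => And.right) |>.trans_eq (by decide)
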